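/- For any natural numbers m and n, there exists an m-connected graph G with γ'_s(G) ≤ −(m(n−1)/(2(n+1)))·|V(G)|. Consequently, for every m there exists a graph G with γ'_s(G) ≤ ((−m+1)/2)·|V(G)|. -/

import Mathlib

open scoped Classical

noncomputable def edgeFin {V : Type*} [Fintype V] (G : SimpleGraph V) : Finset (Sym2 V) :=
  Finset.univ.filter (· ∈ G.edgeSet)

noncomputable def closedNbhd {V : Type*} [Fintype V] (G : SimpleGraph V) (e : Sym2 V) :
    Finset (Sym2 V) :=
  (edgeFin G).filter (fun e' => ∃ v, v ∈ e ∧ v ∈ e')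

def IsSEDF {V : Type*} [Fintype V] (G : SimpleGraph V) (f : Sym2 V → ℤ) : Prop :=
  (∀ e ∈ edgeFin G, f e = 1 ∨ f e = -1) ∧
  ∀ e ∈ edgeFin G, 1 ≤ ∑ e' ∈ closedNbhd G e, f e'

noncomputable def vsum {V : Type*} [Fintype V] (G : SimpleGraph V) (f : Sym2 V → ℤ) (v : V) : ℤ :=
  ∑ e ∈ (edgeFin G).filter (fun e => v ∈ e), f e

noncomputable def gammaS {V : Type*} [Fintype V] (G : SimpleGraph V) : ℤ :=
  sInf {z : ℤ | ∃ f, IsSEDF G f ∧ z = ∑ e ∈ edgeFin G, f e}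

def IsLGraph {V : Type*} [Fintype V] (m n : ℕ) (G : SimpleGraph V) : Prop :=
  Fintype.card V = (n + 1) * (m * n + m + 1) ∧
  ∃ P : Fin (n + 1) → Finset V,
    (∀ v : V, ∃! i, v ∈ P i) ∧
    (∀ i, (P i).card = m * n + m + 1) ∧
    (∀ u ∈ P 0, ∀ v ∈ P 0, u ≠ v → G.Adj u v) ∧
    (∀ i, i ≠ 0 → ∀ u ∈ P i, ∀ v ∈ P i, ¬ G.Adj u v) ∧
    (∀ i, i ≠ 0 → ∀ v ∈ P i, ((P 0).filter (G.Adj v)).card = m) ∧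
    (∀ i, i ≠ 0 → ∀ v ∈ P 0, ((P i).filter (G.Adj v)).card = m) ∧
    (∀ i j, i ≠ 0 → j ≠ 0 → i ≠ j → ∀ u ∈ P i, ∀ v ∈ P j, ¬ G.Adj u v)

def MConnected {V : Type*} [Fintype V] (m : ℕ) (G : SimpleGraph V) : Prop :=
  m < Fintype.card V ∧
  ∀ S : Finset V, S.card < m → (G.induce ((↑S : Set V)ᶜ)).Connected

def IsElementary {V : Type*} (H : SimpleGraph V) : Prop :=
  (∀ v, (H.neighborSet v).ncard ≤ 2) ∧
  ∀ v, (H.neighborSet v).ncard = 1 → ∀ w, H.Adj v w → (H.neighborSet w).ncard = 1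

/-!
Let `Q` be a clique on `C = mn + m + 1` vertices and add `n` independent sets of `C` vertices,
each vertex of which is joined to `m` cyclically consecutive vertices of `Q`; then every vertex
of `Q` has exactly `m` neighbours in each added set. Weight the edges inside `Q` by `+1` and all
other edges by `-1`. A vertex of `Q` then has edge sum `(C - 1) - nm = m` and every other vertex
has edge sum `-m`, so the closed neighbourhood of every edge has sum at least `1`, and the total
weight is `(mC - nmC) / 2 = -m(n-1)/(2(n+1)) · |V|`. Deleting fewer than `m` vertices keeps a
vertex of `Q` and a neighbour in `Q` of every remaining vertex, so the graph is `m`-connected.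
The second bound is the case `n = 2m + 1`, since `m² / (m + 1) ≥ m - 1`.
-/

open Finset SimpleGraph

section SignedEdgeDomination

variable {V : Type*} [Fintype V] (G : SimpleGraph V)

lemma filter_edgeFin_mem_eq_image (v : V) :
    (edgeFin G).filter (v ∈ ·) = (G.neighborFinset v).image (s(v, ·)) := by
  ext e
  induction e using Sym2.ind with
  | _ a b =>
    simp only [edgeFin, mem_filter, mem_univ, true_and, mem_image, mem_neighborFinset,
      mem_edgeSet, Sym2.mem_iff, Sym2.eq_iff]
    constructor
    · rintro ⟨hab, rfl | rfl⟩
      · exact ⟨b, hab, by tauto⟩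
      · exact ⟨a, hab.symm, by tauto⟩
    · rintro ⟨w, hw, ⟨rfl, rfl⟩ | ⟨rfl, rfl⟩⟩
      · exact ⟨hw, Or.inl rfl⟩
      · exact ⟨hw.symm, Or.inr rfl⟩

lemma vsum_eq_sum_neighborFinset (f : Sym2 V → ℤ) (v : V) :
    vsum G f v = ∑ w ∈ G.neighborFinset v, f s(v, w) := by
  rw [vsum, filter_edgeFin_mem_eq_image]
  exact sum_image fun _ _ _ _ h => Sym2.congr_right.mp h

lemma sum_closedNbhd_eq (f : Sym2 V → ℤ) {a b : V} (hab : G.Adj a b) :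
    ∑ e ∈ closedNbhd G s(a, b), f e = vsum G f a + vsum G f b - f s(a, b) := by
  have hunion :
      closedNbhd G s(a, b) = (edgeFin G).filter (a ∈ ·) ∪ (edgeFin G).filter (b ∈ ·) := by
    rw [← filter_or]
    refine filter_congr fun e _ => ?_
    simp [Sym2.mem_iff]
  have hinter : (edgeFin G).filter (a ∈ ·) ∩ (edgeFin G).filter (b ∈ ·) = {s(a, b)} := by
    ext e
    simp only [← filter_and, mem_filter, mem_singleton, Sym2.mem_and_mem_iff hab.ne]
    constructor
    · exact And.right
    · rintro rfl
      simpa [edgeFin] using hab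
  have := sum_union_inter (f := f) (s₁ := (edgeFin G).filter (a ∈ ·))
    (s₂ := (edgeFin G).filter (b ∈ ·))
  rw [hinter, sum_singleton] at this
  rw [hunion, vsum, vsum]
  linarith

lemma sum_vsum_eq_two_mul_sum (f : Sym2 V → ℤ) :
    ∑ v, vsum G f v = 2 * ∑ e ∈ edgeFin G, f e := by
  simp only [vsum]
  rw [sum_comm' (t' := edgeFin G) (s' := Sym2.toFinset) fun v e => by
    simp [Sym2.mem_toFinset, and_comm], mul_sum]
  refine sum_congr rfl fun e he => ?_
  have hdiag : ¬ e.IsDiag := G.not_isDiag_of_mem_edgeSet (by simpa [edgeFin] using he)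
  rw [sum_const, Sym2.card_toFinset_of_not_isDiag e hdiag, two_nsmul, two_mul]

lemma gammaS_le_of_isSEDF {f : Sym2 V → ℤ} (hf : IsSEDF G f) :
    gammaS G ≤ ∑ e ∈ edgeFin G, f e := by
  refine csInf_le ⟨-#(edgeFin G), ?_⟩ ⟨f, hf, rfl⟩
  rintro _ ⟨g, hg, rfl⟩
  have hge : ∀ e ∈ edgeFin G, (-1 : ℤ) ≤ g e := fun e he => by
    rcases hg.1 e he with h | h <;> omega
  simpa using sum_le_sum hge

end SignedEdgeDomination

lemma SimpleGraph.connected_induce_of_isClique {V : Type*} {G : SimpleGraph V} {s Q : Set V}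
    (hQ : G.IsClique Q) {q : V} (hqQ : q ∈ Q) (hqs : q ∈ s)
    (h : ∀ v ∈ s, v ∉ Q → ∃ w ∈ Q, w ∈ s ∧ G.Adj v w) : (G.induce s).Connected := by
  have reach_of_mem : ∀ w : s, (w : V) ∈ Q → (G.induce s).Reachable ⟨q, hqs⟩ w := by
    rintro ⟨w, hws⟩ hwQ
    by_cases hqw : q = w
    · subst hqw; rfl
    · exact Adj.reachable (hQ hqQ hwQ hqw)
  refine (connected_iff_exists_forall_reachable _).mpr ⟨⟨q, hqs⟩, fun ⟨v, hvs⟩ => ?_⟩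
  by_cases hvQ : v ∈ Q
  · exact reach_of_mem ⟨v, hvs⟩ hvQ
  · obtain ⟨w, hwQ, hws, hvw⟩ := h v hvs hvQ
    exact (reach_of_mem ⟨w, hws⟩ hwQ).trans (Adj.reachable (G := G.induce s) hvw.symm)

lemma SimpleGraph.neighborFinset_comap_equiv {V W : Type*} (G : SimpleGraph V) (e : W ≃ V)
    (w : W) [Fintype (G.neighborSet (e w))] [Fintype ((G.comap e).neighborSet w)] :
    (G.comap e).neighborFinset w = (G.neighborFinset (e w)).map e.symm.toEmbedding := by
  ext u
  simp

section Hub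

variable {V : Type*} [Fintype V] {G : SimpleGraph V} {m n : ℕ} {Q : Finset V}

noncomputable def hubSign (Q : Finset V) (e : Sym2 V) : ℤ := if e ∈ Q.sym2 then 1 else -1

-- The clique `P 0` of an L-graph (`IsLGraph`), through the properties the argument uses.
structure IsHub (G : SimpleGraph V) (m n : ℕ) (Q : Finset V) : Prop where
  card_eq : #Q = m * n + m + 1
  isClique : G.IsClique (Q : Set V)
  mem_of_adj : ∀ ⦃v w⦄, v ∉ Q → G.Adj v w → w ∈ Q
  degree_of_notMem : ∀ v ∉ Q, G.degree v = m
  card_neighbor_notMem : ∀ v ∈ Q, #{w ∈ G.neighborFinset v | w ∉ Q} = n * m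

namespace IsHub

lemma vsum_hubSign_of_mem (hQ : IsHub G m n Q) {v : V} (hv : v ∈ Q) :
    vsum G (hubSign Q) v = m := by
  have hinner : {w ∈ G.neighborFinset v | w ∈ Q} = Q.erase v := by
    ext w
    simp only [mem_filter, mem_neighborFinset, mem_erase]
    exact ⟨fun ⟨hvw, hw⟩ => ⟨hvw.ne', hw⟩,
      fun ⟨hwv, hw⟩ => ⟨hQ.isClique hv hw hwv.symm, hw⟩⟩
  have hcard : #(Q.erase v) = m * n + m := by
    rw [card_erase_of_mem hv, hQ.card_eq]; rfl
  rw [vsum_eq_sum_neighborFinset]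
  simp only [hubSign, mk_mem_sym2_iff, hv, true_and]
  rw [sum_ite, sum_const, sum_const, hinner, hcard, hQ.card_neighbor_notMem v hv]
  simp only [nsmul_eq_mul, mul_one, mul_neg_one]
  push_cast
  ring

lemma vsum_hubSign_of_notMem (hQ : IsHub G m n Q) {v : V} (hv : v ∉ Q) :
    vsum G (hubSign Q) v = -m := by
  rw [vsum_eq_sum_neighborFinset]
  simp only [hubSign, mk_mem_sym2_iff, hv, false_and, if_false]
  rw [sum_const, card_neighborFinset_eq_degree, hQ.degree_of_notMem v hv]
  simp

lemma isSEDF_hubSign (hQ : IsHub G m n Q) : IsSEDF G (hubSign Q) := by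
  refine ⟨fun e _ => by unfold hubSign; split <;> simp, fun e he => ?_⟩
  induction e using Sym2.ind with
  | _ a b =>
    have hab : G.Adj a b := by simpa [edgeFin] using he
    rw [sum_closedNbhd_eq G _ hab]
    by_cases ha : a ∈ Q
    · by_cases hb : b ∈ Q
      · have hm : 1 ≤ m := by
          have := hQ.card_eq ▸ one_lt_card.mpr ⟨a, ha, b, hb, hab.ne⟩
          rcases m with _ | m
          · simp at this
          · omega
        simp only [hQ.vsum_hubSign_of_mem ha, hQ.vsum_hubSign_of_mem hb, hubSign,
          mk_mem_sym2_iff, ha, hb, and_self, if_true]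
        omega
      · simp only [hQ.vsum_hubSign_of_mem ha, hQ.vsum_hubSign_of_notMem hb, hubSign,
          mk_mem_sym2_iff, hb, and_false, if_false]
        omega
    · have hb := hQ.mem_of_adj ha hab
      simp only [hQ.vsum_hubSign_of_notMem ha, hQ.vsum_hubSign_of_mem hb, hubSign,
        mk_mem_sym2_iff, ha, false_and, if_false]
      omega

lemma two_mul_sum_hubSign (hQ : IsHub G m n Q) :
    2 * ∑ e ∈ edgeFin G, hubSign Q e = m * #Q - m * #Qᶜ := by
  rw [← sum_vsum_eq_two_mul_sum, ← sum_add_sum_compl Q,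
    sum_congr rfl fun v hv => hQ.vsum_hubSign_of_mem hv,
    sum_congr rfl fun v hv => hQ.vsum_hubSign_of_notMem (mem_compl.mp hv)]
  simp only [sum_const, nsmul_eq_mul]
  ring

lemma gammaS_le (hQ : IsHub G m n Q) (hV : Fintype.card V = (n + 1) * (m * n + m + 1)) :
    (gammaS G : ℚ) ≤ -((m : ℚ) * (n - 1) / (2 * (n + 1))) * Fintype.card V := by
  have hle : (gammaS G : ℚ) ≤ ∑ e ∈ edgeFin G, hubSign Q e :=
    mod_cast gammaS_le_of_isSEDF G hQ.isSEDF_hubSign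
  have htotal : 2 * ((∑ e ∈ edgeFin G, hubSign Q e : ℤ) : ℚ)
      = m * #Q - m * (Fintype.card V - #Q) := by
    rw [← Nat.cast_sub (card_le_univ Q), ← card_compl]
    exact_mod_cast hQ.two_mul_sum_hubSign
  rw [hQ.card_eq, hV] at htotal
  refine hle.trans_eq ?_
  rw [hV]
  push_cast at htotal ⊢
  field_simp
  linear_combination htotal

lemma mConnected (hQ : IsHub G m n Q) : MConnected m G := by
  have hmQ : m < #Q := by rw [hQ.card_eq]; omega
  refine ⟨hmQ.trans_le (card_le_univ Q), fun S hS => ?_⟩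
  obtain ⟨q, hqQ, hqS⟩ := exists_mem_notMem_of_card_lt_card (hS.trans hmQ)
  refine connected_induce_of_isClique hQ.isClique hqQ (by simpa using hqS) fun v hvS hvQ => ?_
  have hdeg : #S < #(G.neighborFinset v) := by
    rwa [card_neighborFinset_eq_degree, hQ.degree_of_notMem v hvQ]
  obtain ⟨w, hw, hwS⟩ := exists_mem_notMem_of_card_lt_card hdeg
  rw [mem_neighborFinset] at hw
  exact ⟨w, hQ.mem_of_adj hvQ hw, by simpa using hwS, hw⟩

lemma comap {W : Type*} [Fintype W] (hQ : IsHub G m n Q) (e : W ≃ V) :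
    IsHub (G.comap e) m n (Q.map e.symm.toEmbedding) where
  card_eq := by rw [card_map, hQ.card_eq]
  isClique u hu v hv huv := by
    rw [mem_coe, mem_map_equiv, Equiv.symm_symm] at hu hv
    exact hQ.isClique hu hv (e.injective.ne huv)
  mem_of_adj u v hu huv := by
    rw [mem_map_equiv, Equiv.symm_symm] at hu ⊢
    exact hQ.mem_of_adj hu huv
  degree_of_notMem u hu := by
    rw [mem_map_equiv, Equiv.symm_symm] at hu
    rw [← card_neighborFinset_eq_degree, neighborFinset_comap_equiv, card_map,
      card_neighborFinset_eq_degree, hQ.degree_of_notMem _ hu]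
  card_neighbor_notMem u hu := by
    rw [mem_map_equiv, Equiv.symm_symm] at hu
    rw [neighborFinset_comap_equiv, filter_map, card_map, ← hQ.card_neighbor_notMem _ hu]
    congr 2
    ext v
    simp

end IsHub

end Hub

section CyclicWindow

variable {m N : ℕ} [NeZero N]

lemma Fin.card_filter_val_sub_left_lt (hm : m ≤ N) (b : Fin N) :
    #{a : Fin N | (b - a).val < m} = m := by
  rw [card_equiv (t := {c : Fin N | (c : ℕ) < m}) (Equiv.subLeft b) fun a => by simp,
    Fin.card_filter_val_lt, min_eq_right hm]

lemma Fin.card_filter_val_sub_right_lt (hm : m ≤ N) (b : Fin N) :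
    #{a : Fin N | (a - b).val < m} = m := by
  rw [card_equiv (t := {c : Fin N | (c : ℕ) < m}) (Equiv.subRight b) fun a => by simp,
    Fin.card_filter_val_lt, min_eq_right hm]

end CyclicWindow

section Construction

variable (m n : ℕ)

def hubGraph : SimpleGraph (Fin (n + 1) × Fin (m * n + m + 1)) :=
  SimpleGraph.fromRel fun x y => x.1 = 0 ∧ (y.1 = 0 ∨ (y.2 - x.2).val < m)

lemma isHub_hubGraph : IsHub (hubGraph m n) m n ({0} ×ˢ univ) where
  card_eq := by simp
  isClique x hx y hy hxy := by
    simp only [coe_product, coe_singleton, coe_univ, Set.mem_prod, Set.mem_singleton_iff,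
      Set.mem_univ, and_true] at hx hy
    exact (fromRel_adj ..).mpr ⟨hxy, Or.inl ⟨hx, Or.inl hy⟩⟩
  mem_of_adj x y hx hxy := by
    simp only [mem_product, mem_singleton, mem_univ, and_true] at hx ⊢
    rw [hubGraph, fromRel_adj] at hxy
    tauto
  degree_of_notMem x hx := by
    simp only [mem_product, mem_singleton, mem_univ, and_true] at hx
    have hnbr : (hubGraph m n).neighborFinset x
        = {0} ×ˢ ({a | (x.2 - a).val < m} : Finset (Fin _)) := by
      ext ⟨i, a⟩
      rw [mem_neighborFinset]
      simp only [hubGraph, fromRel_adj, mem_product, mem_singleton, mem_filter, mem_univ,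
        true_and]
      grind
    rw [← card_neighborFinset_eq_degree, hnbr, card_product, card_singleton, one_mul,
      Fin.card_filter_val_sub_left_lt (by omega)]
  card_neighbor_notMem x hx := by
    simp only [mem_product, mem_singleton, mem_univ, and_true] at hx
    have hcard : #((univ.erase (0 : Fin (n + 1))) ×ˢ
        ({b | (b - x.2).val < m} : Finset (Fin _))) = n * m := by
      rw [card_product, card_erase_of_mem (mem_univ _), card_univ, Fintype.card_fin,
        Nat.add_sub_cancel, Fin.card_filter_val_sub_right_lt (by omega)]
    rw [← hcard]
    congr 1
    ext ⟨i, b⟩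
    simp only [mem_filter, mem_neighborFinset]
    simp only [hubGraph, fromRel_adj, mem_product, mem_singleton, mem_univ, mem_erase]
    grind

lemma exists_isHub :
    ∃ (G : SimpleGraph (Fin ((n + 1) * (m * n + m + 1)))) (Q : Finset _), IsHub G m n Q :=
  ⟨_, _, (isHub_hubGraph m n).comap finProdFinEquiv.symm⟩

end Construction

lemma exists_mConnected_gammaS_le (m n : ℕ) :
    ∃ (k : ℕ) (G : SimpleGraph (Fin k)), MConnected m G ∧
      (gammaS G : ℚ) ≤ -((m : ℚ) * ((n : ℚ) - 1) / (2 * ((n : ℚ) + 1))) * k := by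
  obtain ⟨G, Q, hQ⟩ := exists_isHub m n
  exact ⟨_, G, hQ.mConnected, by simpa using hQ.gammaS_le (Fintype.card_fin _)⟩

theorem stmt7 :
    (∀ m n : ℕ, ∃ (k : ℕ) (G : SimpleGraph (Fin k)), MConnected m G ∧
      (gammaS G : ℚ) ≤ -((m : ℚ) * ((n : ℚ) - 1) / (2 * ((n : ℚ) + 1))) * k) ∧
    (∀ m : ℕ, ∃ (k : ℕ) (G : SimpleGraph (Fin k)),
      (gammaS G : ℚ) ≤ ((-(m : ℚ) + 1) / 2) * k) := by
  refine ⟨exists_mConnected_gammaS_le, fun m => ?_⟩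
  obtain ⟨k, G, -, hG⟩ := exists_mConnected_gammaS_le m (2 * m + 1)
  refine ⟨k, G, hG.trans (mul_le_mul_of_nonneg_right ?_ k.cast_nonneg)⟩
  rw [neg_le, ← neg_div, div_le_div_iff₀ (by positivity) (by positivity)]
  push_cast
  nlinarith
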